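/- arXiv:1310.5856 — 4 statements merged into one kernel-verified Lean document; each statement's English description precedes it below -/
import Mathlib

section
/- Let n ≥ 2, β ∈ ℝ, and ϑ₁,…,ϑₙ distinct real numbers. Define the n×n matrices 𝒜 with first row zero, and for j ≥ 2 the j-th row having 1/(ϑ₁−ϑⱼ) in column 1, 1/(ϑⱼ−ϑ₁) in column j and zeros elsewhere; and ℬ whose first row is (−1,…,−1) and whose rows 2 through n each equal (−βϑ₁,…,−βϑₙ). Then 𝒜ℬ* is a Hermitian (self-adjoint) matrix. -/
/-! Row `i ≠ 1` of `𝒜` is supported on columns `1` and `i`, so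
`(𝒜ℬᵀ)ᵢₖ = (ℬₖ₁ - ℬₖᵢ) / (ϑ₁ - ϑᵢ)`: this is `0` for `k = 1` because the first row of `ℬ` is
constant, and `-β` for `k ≠ 1`. Together with the zero first row of `𝒜`, the product is `-β` off
the first row and column and `0` on them, which is symmetric. -/

open Matrix

theorem Matrix.mul_transpose_apply_eq_add_of_row_support {l m n R : Type*} [Fintype n]
    [NonUnitalNonAssocSemiring R] {A : Matrix m n R} (B : Matrix l n R) {i : m} {a b : n}
    (hab : a ≠ b) (hA : ∀ j, j ≠ a → j ≠ b → A i j = 0) (k : l) :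
    (A * Bᵀ) i k = A i a * B k a + A i b * B k b :=
  Fintype.sum_eq_add a b hab fun j hj => mul_eq_zero_of_left (hA j hj.1 hj.2) _

theorem one_div_sub_mul_add_one_div_sub_mul {K : Type*} [Field K] (a b x y : K) :
    1 / (a - b) * x + 1 / (b - a) * y = (x - y) / (a - b) := by
  rw [← neg_sub a b, one_div_neg_eq_neg_one_div]
  ring

open Matrix in
theorem AB_star_hermitian (n : ℕ) (hn : 2 ≤ n) (β : ℝ) (ϑ : Fin n → ℝ)
    (hϑ : Function.Injective ϑ)
    (A B : Matrix (Fin n) (Fin n) ℝ)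
    (hA : ∀ i j, A i j =
      if (i : ℕ) = 0 then 0
      else if (j : ℕ) = 0 then 1 / (ϑ ⟨0, by omega⟩ - ϑ i)
      else if j = i then 1 / (ϑ i - ϑ ⟨0, by omega⟩) else 0)
    (hB : ∀ i j, B i j = if (i : ℕ) = 0 then -1 else -β * ϑ j) :
    (A * Bᵀ).IsHermitian := by
  set z : Fin n := ⟨0, by omega⟩
  have entry : ∀ i k, (A * Bᵀ) i k = if (i : ℕ) = 0 ∨ (k : ℕ) = 0 then 0 else -β := by
    intro i k
    by_cases hi : (i : ℕ) = 0
    · simp [mul_apply, hA, hi]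
    have hiz : i ≠ z := fun h => hi (congrArg Fin.val h)
    have hsub : ϑ z - ϑ i ≠ 0 := sub_ne_zero.2 fun h => hiz (hϑ h).symm
    have hAz : A i z = 1 / (ϑ z - ϑ i) := by simp [hA, hi, z]
    have hAi : A i i = 1 / (ϑ i - ϑ z) := by simp [hA, hi]
    have hA_zero : ∀ j, j ≠ z → j ≠ i → A i j = 0 := fun j hjz hji => by
      simp [hA, hi, hji, show (j : ℕ) ≠ 0 from fun h => hjz (Fin.ext h)]
    rw [mul_transpose_apply_eq_add_of_row_support B hiz.symm hA_zero, hAz, hAi,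
      one_div_sub_mul_add_one_div_sub_mul, hB, hB]
    by_cases hk : (k : ℕ) = 0
    · simp [hk]
    · simp only [hk, hi, or_self, if_false]
      field_simp
      ring
  refine isHermitian_iff_isSymm.2 (IsSymm.ext fun i k => ?_)
  rw [entry, entry]
  simp only [or_comm]
end

section
/- Let n ≥ 2, k > 0, β ∈ ℝ, and ϑ₁,…,ϑₙ ∈ ℝ; set B := (1/n)(∑ᵢϑᵢ)² − ∑ᵢϑᵢ² and Πᵢⱼ := (μ−ϑᵢ)(μ−ϑⱼ) with μ := (1/n)∑ₗϑₗ. Then the n×n complex matrix 𝒮(k) with entries 𝒮ᵢⱼ(k) = 2/n − δᵢⱼ − 2ikβΠᵢⱼ/(1+ikβB) is unitary. -/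
/-!
Write `S = R + c • w wᴴ`, where `R = (2/n) J - 1` is the reflection in the line of constant
vectors, `w i = μ - ϑ i` and `c = -2ikβ / (1 + ikβB)`. Since `w` is orthogonal to the constants,
`R w = -w`, hence `S Sᴴ = 1 + (|c|² ‖w‖² - c - c̄) • w wᴴ`. Finally `‖w‖² = -B`, and for this `c`
the bracket vanishes.
-/

open Complex Matrix

section RankOnePerturbation

variable {ι K : Type*} [Fintype ι] [DecidableEq ι] [Field K] [StarRing K]

theorem add_smul_vecMulVec_mul_conjTranspose_eq_one {R : Matrix ι ι K} (hR : R * Rᴴ = 1)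
    {w : ι → K} (hRw : R *ᵥ w = -w) {c : K} (hc : c + star c = c * star c * (star w ⬝ᵥ w)) :
    (R + c • vecMulVec w (star w)) * (R + c • vecMulVec w (star w))ᴴ = 1 := by
  have hwR : vecMulVec w (star w) * Rᴴ = -vecMulVec w (star w) := by
    rw [vecMulVec_mul, ← star_mulVec, hRw, star_neg, vecMulVec_neg]
  have hRw' : R * vecMulVec w (star w) = -vecMulVec w (star w) := by
    rw [mul_vecMulVec, hRw, neg_vecMulVec]
  have hww : vecMulVec w (star w) * vecMulVec w (star w) =
      (star w ⬝ᵥ w) • vecMulVec w (star w) := by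
    rw [vecMulVec_mul_vecMulVec, vecMulVec_smul]
  simp only [conjTranspose_add, conjTranspose_smul, conjTranspose_vecMulVec, star_star, add_mul,
    mul_add, Matrix.mul_smul, Matrix.smul_mul, hR, hwR, hRw', hww, smul_smul]
  linear_combination (norm := module) (-hc) • vecMulVec w (star w)

/-- Reflection in the line `K ∙ e`; it degenerates to `-1` when `star e ⬝ᵥ e = 0`. -/
def lineReflection (e : ι → K) : Matrix ι ι K :=
  (2 / (star e ⬝ᵥ e)) • vecMulVec e (star e) - 1

theorem lineReflection_one_apply (i j : ι) :
    lineReflection (1 : ι → K) i j = 2 / Fintype.card ι - (1 : Matrix ι ι K) i j := by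
  simp [lineReflection, one_dotProduct_one]

theorem lineReflection_mulVec_of_dotProduct_eq_zero {e w : ι → K} (h : star e ⬝ᵥ w = 0) :
    lineReflection e *ᵥ w = -w := by
  simp [lineReflection, sub_mulVec, smul_mulVec, vecMulVec_mulVec, h]

theorem lineReflection_mul_conjTranspose (e : ι → K) :
    lineReflection e * (lineReflection e)ᴴ = 1 := by
  have hstar : star (2 / (star e ⬝ᵥ e)) = 2 / (star e ⬝ᵥ e) := by
    rw [star_div₀, star_ofNat, ← star_dotProduct_star, star_star]
  have hee : vecMulVec e (star e) * vecMulVec e (star e) =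
      (star e ⬝ᵥ e) • vecMulVec e (star e) := by
    rw [vecMulVec_mul_vecMulVec, vecMulVec_smul]
  simp only [lineReflection, conjTranspose_sub, conjTranspose_smul, conjTranspose_vecMulVec,
    star_star, hstar, conjTranspose_one, sub_mul, mul_sub, Matrix.mul_smul, Matrix.smul_mul, hee,
    smul_smul, Matrix.mul_one, Matrix.one_mul]
  field_simp
  module

end RankOnePerturbation

theorem sum_mean_sub_eq_zero {ι : Type*} [Fintype ι] [Nonempty ι] (ϑ : ι → ℝ) :
    ∑ i, ((1 / (Fintype.card ι : ℝ)) * ∑ l, ϑ l - ϑ i) = 0 := by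
  rw [Finset.sum_sub_distrib, Finset.sum_const, Finset.card_univ, nsmul_eq_mul]
  field_simp
  ring

theorem sum_mean_sub_sq {ι : Type*} [Fintype ι] [Nonempty ι] (ϑ : ι → ℝ) :
    ∑ i, ((1 / (Fintype.card ι : ℝ)) * ∑ l, ϑ l - ϑ i) ^ 2
      = -((1 / (Fintype.card ι : ℝ)) * (∑ i, ϑ i) ^ 2 - ∑ i, ϑ i ^ 2) := by
  simp only [sub_sq, Finset.sum_add_distrib, Finset.sum_sub_distrib, Finset.sum_const,
    Finset.card_univ, nsmul_eq_mul, ← Finset.mul_sum]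
  field_simp
  ring

theorem add_star_eq_mul_star_mul_neg {t B : ℝ} (h : 1 + I * t * B ≠ 0) {c : ℂ}
    (hc : c = -(2 * I * t) / (1 + I * t * B)) :
    c + star c = c * star c * -(B : ℂ) := by
  have h' : 1 - I * t * B ≠ 0 := by
    simpa [sub_eq_add_neg] using star_ne_zero.2 h
  subst hc
  simp only [star_div₀, star_neg, star_add, star_mul', star_one, Complex.star_def, conj_I,
    conj_ofReal, map_ofNat, neg_mul, ← sub_eq_add_neg, mul_neg, neg_neg]
  field_simp
  ring

open Complex Matrix in
theorem scattering_matrix_unitary_general (n : ℕ) (hn : 2 ≤ n) (k β : ℝ)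
    (ϑ : Fin n → ℝ)
    (B : ℝ) (hB : B = (1 / (n : ℝ)) * (∑ i, ϑ i) ^ 2 - ∑ i, (ϑ i) ^ 2)
    (P : Matrix (Fin n) (Fin n) ℝ)
    (hP : ∀ i j, P i j =
      ((1 / (n : ℝ)) * ∑ l, ϑ l - ϑ i) * ((1 / (n : ℝ)) * ∑ l, ϑ l - ϑ j))
    (hden : (1 : ℂ) + I * k * β * B ≠ 0)
    (S : Matrix (Fin n) (Fin n) ℂ)
    (hS : ∀ i j, S i j = 2 / (n : ℂ) - (if i = j then 1 else 0)
      - 2 * I * k * β * (P i j) / (1 + I * k * β * B)) :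
    S * Sᴴ = 1 ∧ Sᴴ * S = 1 := by
  have : Nonempty (Fin n) := ⟨⟨0, by omega⟩⟩
  set w : Fin n → ℂ := fun i => ((1 / (n : ℝ) * ∑ l, ϑ l - ϑ i : ℝ) : ℂ)
  set c : ℂ := -(2 * I * (k * β : ℝ)) / (1 + I * (k * β : ℝ) * B) with hc_def
  have hPw : ∀ i j, ((P i j : ℝ) : ℂ) = w i * star (w j) := fun i j => by
    simp [hP, w, conj_ofReal]
  have hS_eq : S = lineReflection 1 + c • vecMulVec w (star w) := by
    ext i j
    rw [Matrix.add_apply, lineReflection_one_apply, Fintype.card_fin, one_apply, Matrix.smul_apply,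
      vecMulVec_apply, hS, hPw, Pi.star_apply, hc_def]
    push_cast
    ring
  have hw_orth : star 1 ⬝ᵥ w = 0 := by
    simpa [w, one_dotProduct] using congrArg ((↑) : ℝ → ℂ) (sum_mean_sub_eq_zero ϑ)
  have hww : star w ⬝ᵥ w = -(B : ℂ) := by
    simpa [w, dotProduct, hB, sq] using congrArg ((↑) : ℝ → ℂ) (sum_mean_sub_sq ϑ)
  have hc : c + star c = c * star c * (star w ⬝ᵥ w) := by
    rw [hww]
    exact add_star_eq_mul_star_mul_neg (by push_cast; rwa [← mul_assoc]) hc_def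
  have hunit := add_smul_vecMulVec_mul_conjTranspose_eq_one
    (lineReflection_mul_conjTranspose (1 : Fin n → ℂ))
    (lineReflection_mulVec_of_dotProduct_eq_zero hw_orth) hc
  rw [hS_eq]
  exact ⟨hunit, mul_eq_one_comm.mp hunit⟩

open Complex Matrix in
theorem scattering_matrix_unitary (n : ℕ) (hn : 2 ≤ n) (k β : ℝ) (hk : 0 < k)
    (ϑ : Fin n → ℝ)
    (B : ℝ) (hB : B = (1 / (n : ℝ)) * (∑ i, ϑ i) ^ 2 - ∑ i, (ϑ i) ^ 2)
    (P : Matrix (Fin n) (Fin n) ℝ)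
    (hP : ∀ i j, P i j =
      ((1 / (n : ℝ)) * ∑ l, ϑ l - ϑ i) * ((1 / (n : ℝ)) * ∑ l, ϑ l - ϑ j))
    (hden : (1 : ℂ) + I * k * β * B ≠ 0)
    (S : Matrix (Fin n) (Fin n) ℂ)
    (hS : ∀ i j, S i j = 2 / (n : ℂ) - (if i = j then 1 else 0)
      - 2 * I * k * β * (P i j) / (1 + I * k * β * B)) :
    S * Sᴴ = 1 ∧ Sᴴ * S = 1 :=
  scattering_matrix_unitary_general n hn k β ϑ B hB P hP hden S hS
end

section
/- Let n ≥ 2, β ≠ 0, ϑ₁,…,ϑₙ ∈ ℝ not all equal, B := (1/n)(∑ᵢϑᵢ)² − ∑ᵢϑᵢ², Πᵢⱼ := (μ−ϑᵢ)(μ−ϑⱼ) with μ the mean of the ϑᵢ. For real k > 0, the scattering matrix 𝒮ᵢⱼ(k) = 2/n − δᵢⱼ − 2ikβΠᵢⱼ/(1+ikβB) converges entrywise to −δᵢⱼ (i.e., to minus the identity matrix) as k → ∞. -/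
/-! With `z = k · iβ` the correction term is `z · 2Πᵢⱼ / (1 + z · B)`, which tends to `2Πᵢⱼ / B`
as `|z| → ∞` provided `B ≠ 0`; and `B < 0` because `-B` is the sum of squared deviations of the
non-constant `ϑ` from their mean. -/

open Filter Topology Bornology

theorem sum_sub_mean_sq {ι K : Type*} [Fintype ι] [Field K] [CharZero K] (f : ι → K) :
    ∑ i, (f i - (∑ j, f j) / Fintype.card ι) ^ 2
      = ∑ i, f i ^ 2 - (∑ i, f i) ^ 2 / Fintype.card ι := by
  rcases isEmpty_or_nonempty ι with hι | hι
  · simp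
  have hcard : (Fintype.card ι : K) ≠ 0 := Nat.cast_ne_zero.mpr Fintype.card_ne_zero
  simp only [sub_sq, Finset.sum_add_distrib, Finset.sum_sub_distrib, Finset.sum_const,
    Finset.card_univ, nsmul_eq_mul, ← Finset.sum_mul, ← Finset.mul_sum]
  field_simp
  ring

theorem sq_sum_div_card_lt_sum_sq {ι : Type*} [Fintype ι] {f : ι → ℝ} (hf : ∃ i j, f i ≠ f j) :
    (∑ i, f i) ^ 2 / Fintype.card ι < ∑ i, f i ^ 2 := by
  obtain ⟨i, j, hij⟩ := hf
  set μ := (∑ l, f l) / Fintype.card ι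
  have hμ : f i ≠ μ ∨ f j ≠ μ := by
    by_contra! h
    exact hij (h.1.trans h.2.symm)
  have hpos : 0 < ∑ l, (f l - μ) ^ 2 := by
    obtain ⟨l, hl⟩ : ∃ l, f l ≠ μ := hμ.elim (⟨i, ·⟩) (⟨j, ·⟩)
    exact Finset.sum_pos' (fun _ _ => sq_nonneg _)
      ⟨l, Finset.mem_univ l, sq_pos_of_ne_zero (sub_ne_zero.mpr hl)⟩
  rw [sum_sub_mean_sq] at hpos
  linarith

theorem tendsto_mul_div_one_add_mul_cobounded {𝕜 : Type*} [NormedField 𝕜] (a : 𝕜) {b : 𝕜}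
    (hb : b ≠ 0) :
    Tendsto (fun z : 𝕜 => z * a / (1 + z * b)) (cobounded 𝕜) (𝓝 (a / b)) := by
  have hlim : Tendsto (fun z : 𝕜 => a / (z⁻¹ + b)) (cobounded 𝕜) (𝓝 (a / b)) := by
    have := (tendsto_inv₀_cobounded (α := 𝕜)).add_const b
    rw [zero_add] at this
    exact tendsto_const_nhds.div this hb
  refine hlim.congr' ?_
  filter_upwards [eventually_ne_cobounded 0] with z hz
  rw [← mul_div_mul_left a _ hz, mul_add, mul_inv_cancel₀ hz]

theorem tendsto_ofReal_mul_cobounded {w : ℂ} (hw : w ≠ 0) :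
    Tendsto (fun k : ℝ => (k : ℂ) * w) atTop (cobounded ℂ) :=
  (tendsto_mul_right_cobounded hw).comp (RCLike.tendsto_ofReal_atTop_cobounded ℂ)

open Complex Filter in
theorem scattering_high_energy_limit_general (n : ℕ) (β : ℝ) (hβ : β ≠ 0)
    (ϑ : Fin n → ℝ) (hϑ : ∃ i j, ϑ i ≠ ϑ j)
    (B : ℝ) (hB : B = (1 / (n : ℝ)) * (∑ i, ϑ i) ^ 2 - ∑ i, (ϑ i) ^ 2)
    (P : Matrix (Fin n) (Fin n) ℝ)
    (S : ℝ → Matrix (Fin n) (Fin n) ℂ)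
    (hS : ∀ k i j, S k i j = 2 / (n : ℂ) - (if i = j then 1 else 0)
      - 2 * I * k * β * (P i j) / (1 + I * k * β * B)) :
    ∀ i j, Tendsto (fun k : ℝ => S k i j) atTop
      (nhds (2 / (n : ℂ) - (if i = j then 1 else 0) - 2 * (P i j) / (B : ℂ))) := by
  intro i j
  have hBneg : B < 0 := by
    have := sq_sum_div_card_lt_sum_sq hϑ
    rw [Fintype.card_fin] at this
    rw [hB, one_div_mul_eq_div]
    linarith
  have hIβ : I * β ≠ 0 := mul_ne_zero I_ne_zero (ofReal_ne_zero.mpr hβ)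
  have hlim := (tendsto_mul_div_one_add_mul_cobounded (2 * (P i j : ℂ))
    (ofReal_ne_zero.mpr hBneg.ne)).comp (tendsto_ofReal_mul_cobounded hIβ)
  refine (tendsto_const_nhds.sub hlim).congr fun k => ?_
  rw [hS]
  simp only [Function.comp_apply]
  ring_nf

open Complex Filter in
theorem scattering_high_energy_limit (n : ℕ) (hn : 2 ≤ n) (β : ℝ) (hβ : β ≠ 0)
    (ϑ : Fin n → ℝ) (hϑ : ∃ i j, ϑ i ≠ ϑ j)
    (B : ℝ) (hB : B = (1 / (n : ℝ)) * (∑ i, ϑ i) ^ 2 - ∑ i, (ϑ i) ^ 2)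
    (P : Matrix (Fin n) (Fin n) ℝ)
    (hP : ∀ i j, P i j =
      ((1 / (n : ℝ)) * ∑ l, ϑ l - ϑ i) * ((1 / (n : ℝ)) * ∑ l, ϑ l - ϑ j))
    (S : ℝ → Matrix (Fin n) (Fin n) ℂ)
    (hS : ∀ k i j, S k i j = 2 / (n : ℂ) - (if i = j then 1 else 0)
      - 2 * I * k * β * (P i j) / (1 + I * k * β * B)) :
    ∀ i j, Tendsto (fun k : ℝ => S k i j) atTop
      (nhds (2 / (n : ℂ) - (if i = j then 1 else 0) - 2 * (P i j) / (B : ℂ))) :=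
  scattering_high_energy_limit_general n β hβ ϑ hϑ B hB P S hS
end

section
/- Let V : [0,∞) → ℝ be integrable with compact support contained in [0,1] and with ∫₀^∞ V = 0. Then for κ > 0, ∫₀^∞∫₀^∞ V(x)V(y)(e^{−κ|x−y|} − e^{−κ(x+y)}) dx dy = 2κ ∫₀^∞∫₀^∞ min{x,y} V(x)V(y) dx dy + O(κ²) as κ → 0⁺. Equivalently, (1/(2κ))∫∫ V(x)V(y)(e^{−κ|x−y|} − e^{−κ(x+y)}) dx dy → ∫∫ min{x,y} V(x)V(y) dx dy as κ → 0⁺. -/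
open MeasureTheory Filter Set Real

private lemma min_half (x y : ℝ) : (x + y - |x - y|) / 2 = min x y := by
  rcases le_total x y with h | h
  · rw [abs_of_nonpos (by linarith), min_eq_left h]; ring
  · rw [abs_of_nonneg (by linarith), min_eq_right h]; ring

private lemma ptlim (a b : ℝ) :
    Tendsto (fun κ : ℝ => (Real.exp (-κ * a) - Real.exp (-κ * b)) / (2 * κ))
      (nhdsWithin 0 (Ioi 0)) (nhds ((b - a) / 2)) := by
  have h1 : HasDerivAt (fun κ : ℝ => Real.exp (-κ * a)) (-a) 0 := by
    have hlin : HasDerivAt (fun κ : ℝ => -κ * a) (-a) 0 := by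
      simpa using ((hasDerivAt_id (0:ℝ)).neg.mul_const a)
    simpa using hlin.exp
  have h2 : HasDerivAt (fun κ : ℝ => Real.exp (-κ * b)) (-b) 0 := by
    have hlin : HasDerivAt (fun κ : ℝ => -κ * b) (-b) 0 := by
      simpa using ((hasDerivAt_id (0:ℝ)).neg.mul_const b)
    simpa using hlin.exp
  have hd : HasDerivAt (fun κ : ℝ => Real.exp (-κ * a) - Real.exp (-κ * b)) (b - a) 0 := by
    have := h1.sub h2
    have he : b - a = -a - -b := by ring
    rw [he]; exact this
  have hs := hasDerivAt_iff_tendsto_slope.mp hd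
  have hs' : Tendsto (slope (fun κ : ℝ => Real.exp (-κ * a) - Real.exp (-κ * b)) 0)
      (nhdsWithin 0 (Ioi 0)) (nhds (b - a)) :=
    hs.mono_left (nhdsWithin_mono _ fun x hx => ne_of_gt hx)
  have hfin := hs'.div_const 2
  refine hfin.congr fun κ => ?_
  rw [slope_def_field]
  simp only [neg_zero, zero_mul, Real.exp_zero, sub_zero, sub_self]
  rw [div_div, mul_comm κ 2]

private lemma kernel_nonneg {κ x y : ℝ} (hκ : 0 < κ) (hx : 0 ≤ x) (hy : 0 ≤ y) :
    0 ≤ Real.exp (-κ * |x - y|) - Real.exp (-κ * (x + y)) := by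
  have hab : |x - y| ≤ x + y := (abs_sub x y).trans_eq (by rw [abs_of_nonneg hx, abs_of_nonneg hy])
  have : -κ * (x + y) ≤ -κ * |x - y| := by nlinarith
  linarith [Real.exp_le_exp.mpr this]

private lemma kernel_bound {κ x y : ℝ} (hκ : 0 < κ) (hx : x ∈ Icc (0:ℝ) 1)
    (hy : y ∈ Icc (0:ℝ) 1) :
    |(Real.exp (-κ * |x - y|) - Real.exp (-κ * (x + y))) / (2 * κ)| ≤ 1 := by
  obtain ⟨hx0, hx1⟩ := hx
  obtain ⟨hy0, hy1⟩ := hy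
  set a := |x - y| with ha
  set b := x + y with hb
  have ha0 : 0 ≤ a := abs_nonneg _
  have hab : a ≤ b := (abs_sub x y).trans_eq (by rw [abs_of_nonneg hx0, abs_of_nonneg hy0])
  have hba : b - a ≤ 2 := by
    rcases le_total x y with h | h
    · rw [ha, abs_of_nonpos (by linarith)]; simp only [hb]; nlinarith
    · rw [ha, abs_of_nonneg (by linarith)]; simp only [hb]; nlinarith
  have hnn : 0 ≤ Real.exp (-κ * a) - Real.exp (-κ * b) := kernel_nonneg hκ hx0 hy0
  have hup : Real.exp (-κ * a) - Real.exp (-κ * b) ≤ κ * (b - a) := by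
    have he : Real.exp (-κ * b) = Real.exp (-κ * a) * Real.exp (-(κ * (b - a))) := by
      rw [← Real.exp_add]; ring_nf
    have h2 : -(κ * (b - a)) + 1 ≤ Real.exp (-(κ * (b - a))) := Real.add_one_le_exp _
    have h3 : Real.exp (-κ * a) ≤ 1 := Real.exp_le_one_iff.mpr (by nlinarith)
    have h4 : 0 < Real.exp (-κ * a) := Real.exp_pos _
    nlinarith [mul_nonneg (le_of_lt h4) (mul_nonneg hκ.le (by linarith : (0:ℝ) ≤ b - a))]
  rw [abs_div, abs_of_nonneg hnn, abs_of_pos (by linarith : (0:ℝ) < 2 * κ)]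
  rw [div_le_one (by linarith)]
  nlinarith

open MeasureTheory Filter Set Real in
theorem small_kappa_kernel_expansion (V : ℝ → ℝ)
    (hV : IntegrableOn V (Ioi 0))
    (hsupp : Function.support V ⊆ Icc 0 1)
    (hmean : ∫ x in Ioi (0:ℝ), V x = 0) :
    Tendsto
      (fun κ : ℝ => (1 / (2 * κ)) *
        ∫ x in Ioi (0:ℝ), ∫ y in Ioi (0:ℝ),
          V x * V y * (Real.exp (-κ * |x - y|) - Real.exp (-κ * (x + y))))
      (nhdsWithin 0 (Ioi 0))
      (nhds (∫ x in Ioi (0:ℝ), ∫ y in Ioi (0:ℝ), min x y * V x * V y)) := by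
  set μ := volume.restrict (Ioi (0:ℝ)) with hμ
  have hmem : ∀ x : ℝ, V x ≠ 0 → x ∈ Icc (0:ℝ) 1 := fun x hx =>
    hsupp (Function.mem_support.mpr hx)
  have hVV : Integrable (fun p : ℝ × ℝ => V p.1 * V p.2) (μ.prod μ) := hV.mul_prod hV
  have hVVm : AEStronglyMeasurable (fun p : ℝ × ℝ => V p.1 * V p.2) (μ.prod μ) :=
    hVV.aestronglyMeasurable
  -- integrability of the limit function
  have hminm : AEStronglyMeasurable (fun p : ℝ × ℝ => min p.1 p.2 * V p.1 * V p.2) (μ.prod μ) := by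
    have : AEStronglyMeasurable (fun p : ℝ × ℝ => min p.1 p.2 * (V p.1 * V p.2)) (μ.prod μ) :=
      ((continuous_fst.min continuous_snd).aestronglyMeasurable).mul hVVm
    simpa only [mul_assoc] using this
  have hlimInt : Integrable (fun p : ℝ × ℝ => min p.1 p.2 * V p.1 * V p.2) (μ.prod μ) := by
    refine Integrable.mono' hVV.abs hminm (Filter.Eventually.of_forall fun p => ?_)
    by_cases hvv : V p.1 * V p.2 = 0
    · simp [mul_assoc, hvv]
    · obtain ⟨h1, h2⟩ := mul_ne_zero_iff.mp hvv
      obtain ⟨hx0, hx1⟩ := hmem _ h1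
      obtain ⟨hy0, hy1⟩ := hmem _ h2
      have hm0 : 0 ≤ min p.1 p.2 := le_min hx0 hy0
      have hm1 : min p.1 p.2 ≤ 1 := min_le_of_left_le hx1
      rw [Real.norm_eq_abs, mul_assoc, abs_mul, abs_of_nonneg hm0]
      nlinarith [abs_nonneg (V p.1 * V p.2)]
  -- dominated convergence for the rescaled kernel on the product space
  have hDC : Tendsto
      (fun κ : ℝ => ∫ p : ℝ × ℝ, V p.1 * V p.2 *
        ((Real.exp (-κ * |p.1 - p.2|) - Real.exp (-κ * (p.1 + p.2))) / (2 * κ)) ∂(μ.prod μ))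
      (nhdsWithin 0 (Ioi 0))
      (nhds (∫ p : ℝ × ℝ, min p.1 p.2 * V p.1 * V p.2 ∂(μ.prod μ))) := by
    refine tendsto_integral_filter_of_dominated_convergence
      (fun p => |V p.1 * V p.2|) ?_ ?_ hVV.abs ?_
    · filter_upwards [self_mem_nhdsWithin] with κ _
      have hker : Continuous (fun p : ℝ × ℝ =>
          (Real.exp (-κ * |p.1 - p.2|) - Real.exp (-κ * (p.1 + p.2))) / (2 * κ)) := by
        fun_prop
      exact hVVm.mul hker.aestronglyMeasurable
    · filter_upwards [self_mem_nhdsWithin] with κ hκ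
      refine Filter.Eventually.of_forall fun p => ?_
      by_cases hvv : V p.1 * V p.2 = 0
      · simp [hvv]
      · obtain ⟨h1, h2⟩ := mul_ne_zero_iff.mp hvv
        have hb := kernel_bound hκ (hmem _ h1) (hmem _ h2)
        rw [Real.norm_eq_abs, abs_mul]
        nlinarith [abs_nonneg (V p.1 * V p.2),
          abs_nonneg ((Real.exp (-κ * |p.1 - p.2|) - Real.exp (-κ * (p.1 + p.2))) / (2 * κ))]
    · refine Filter.Eventually.of_forall fun p => ?_
      have := (ptlim |p.1 - p.2| (p.1 + p.2)).const_mul (V p.1 * V p.2)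
      have heq : V p.1 * V p.2 * ((p.1 + p.2 - |p.1 - p.2|) / 2) = min p.1 p.2 * V p.1 * V p.2 := by
        rw [min_half p.1 p.2]; ring
      rw [heq] at this
      exact this
  -- identify iterated integrals with product integrals
  have hlim_eq : (∫ x in Ioi (0:ℝ), ∫ y in Ioi (0:ℝ), min x y * V x * V y) =
      ∫ p : ℝ × ℝ, min p.1 p.2 * V p.1 * V p.2 ∂(μ.prod μ) := by
    exact integral_integral hlimInt
  rw [hlim_eq]
  refine hDC.congr' ?_
  filter_upwards [self_mem_nhdsWithin] with κ (hκ : (0:ℝ) < κ)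
  -- integrability of the unrescaled integrand
  have hkerm : Continuous (fun p : ℝ × ℝ =>
      Real.exp (-κ * |p.1 - p.2|) - Real.exp (-κ * (p.1 + p.2))) := by fun_prop
  have hIm : AEStronglyMeasurable (fun p : ℝ × ℝ =>
      V p.1 * V p.2 * (Real.exp (-κ * |p.1 - p.2|) - Real.exp (-κ * (p.1 + p.2)))) (μ.prod μ) :=
    hVVm.mul hkerm.aestronglyMeasurable
  have hInt : Integrable (fun p : ℝ × ℝ =>
      V p.1 * V p.2 * (Real.exp (-κ * |p.1 - p.2|) - Real.exp (-κ * (p.1 + p.2)))) (μ.prod μ) := by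
    refine Integrable.mono' (hVV.abs.const_mul 2) hIm (Filter.Eventually.of_forall fun p => ?_)
    by_cases hvv : V p.1 * V p.2 = 0
    · simp [hvv]
    · obtain ⟨h1, h2⟩ := mul_ne_zero_iff.mp hvv
      obtain ⟨hx0, hx1⟩ := hmem _ h1
      obtain ⟨hy0, hy1⟩ := hmem _ h2
      have e1 : Real.exp (-κ * |p.1 - p.2|) ≤ 1 :=
        Real.exp_le_one_iff.mpr (by nlinarith [abs_nonneg (p.1 - p.2)])
      have e2 : Real.exp (-κ * (p.1 + p.2)) ≤ 1 := Real.exp_le_one_iff.mpr (by nlinarith)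
      have e3 : (0:ℝ) < Real.exp (-κ * |p.1 - p.2|) := Real.exp_pos _
      have e4 : (0:ℝ) < Real.exp (-κ * (p.1 + p.2)) := Real.exp_pos _
      have hd : |Real.exp (-κ * |p.1 - p.2|) - Real.exp (-κ * (p.1 + p.2))| ≤ 2 := by
        rw [abs_sub_le_iff]; constructor <;> nlinarith
      rw [Real.norm_eq_abs, abs_mul]
      nlinarith [abs_nonneg (V p.1 * V p.2),
        abs_nonneg (Real.exp (-κ * |p.1 - p.2|) - Real.exp (-κ * (p.1 + p.2)))]
  have hiter : (∫ x in Ioi (0:ℝ), ∫ y in Ioi (0:ℝ),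
      V x * V y * (Real.exp (-κ * |x - y|) - Real.exp (-κ * (x + y)))) =
      ∫ p : ℝ × ℝ, V p.1 * V p.2 *
        (Real.exp (-κ * |p.1 - p.2|) - Real.exp (-κ * (p.1 + p.2))) ∂(μ.prod μ) :=
    integral_integral hInt
  rw [hiter, ← integral_const_mul]
  refine integral_congr_ae (Filter.Eventually.of_forall fun p => ?_)
  ring
end
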